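/- Let A and C be independent uniform random variables on {0,...,N_A-1} and {0,...,N_C-1} with N_A ≥ N_C ≥ 2, and X = A + C. Then I(A;C|X) ≥ ln N_C - (1/N_A)[(N_C-1) ln N_C - ((N_C-1)²/N_C) ln(N_C-1) + (N_C-2)/2]. -/

import Mathlib

/-!
Since `A = X - C`, the term `H(A | X, C)` vanishes, and since `(A, X)` and `(A, C)` determine each
other, `I(A; C | X) = H(A, C) - H(X) = log (N_A N_C) - H(X)`. For the uniform measure,
`H(X) = log (N_A N_C) - (N_A N_C)⁻¹ ∑ₓ nₓ log nₓ`, where `nₓ` counts the pairs with `a + c = x`.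
These counts form the trapezoid `1, 2, …, N_C - 1, N_C, …, N_C, N_C - 1, …, 1` with
`N_A - N_C + 1` plateau values, so
`I(A; C | X) = (N_A N_C)⁻¹ (2 ∑_{k < N_C} k log k + (N_A - N_C + 1) N_C log N_C)`.
The bound follows from `2 ∑_{k ≤ n} k log k ≥ n² log n - (n² - 1) / 2`, which is proved by
induction using `log (n + 1) ≤ log n + 1 / n`.
-/

open scoped Classical
open Finset

namespace ESSL

variable {Ω : Type*} [Fintype Ω]

/-- Probability that the random variable `Y` takes the value `a`, under weights `p`. -/
noncomputable def pr {α : Type*} (p : Ω → ℝ) (Y : Ω → α) (a : α) : ℝ :=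
  ∑ ω ∈ univ.filter (fun ω => Y ω = a), p ω

/-- Shannon entropy (in nats) of a random variable `Y` on a finite space. -/
noncomputable def ent {α : Type*} (p : Ω → ℝ) (Y : Ω → α) : ℝ :=
  ∑ a ∈ univ.image Y, -(pr p Y a * Real.log (pr p Y a))

/-- Conditional entropy `H(Y | X)`. -/
noncomputable def condEnt {α β : Type*} (p : Ω → ℝ) (Y : Ω → α) (X : Ω → β) : ℝ :=
  ent p (fun ω => (Y ω, X ω)) - ent p X

/-- Mutual information `I(Y ; X)`. -/
noncomputable def mi {α β : Type*} (p : Ω → ℝ) (Y : Ω → α) (X : Ω → β) : ℝ :=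
  ent p Y - condEnt p Y X

/-- Conditional mutual information `I(A ; C | X) = H(A|X) - H(A|X,C)`. -/
noncomputable def cmi {α β γ : Type*} (p : Ω → ℝ) (A : Ω → α) (C : Ω → β) (X : Ω → γ) : ℝ :=
  condEnt p A X - condEnt p A (fun ω => (X ω, C ω))

/-- `p` is a probability mass function on `Ω`. -/
def IsProb (p : Ω → ℝ) : Prop := (∀ ω, 0 ≤ p ω) ∧ ∑ ω, p ω = 1

/-- Independence of the random variables `A` and `C`. -/
def IndepRV {α β : Type*} (p : Ω → ℝ) (A : Ω → α) (C : Ω → β) : Prop :=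
  ∀ a c, pr p (fun ω => (A ω, C ω)) (a, c) = pr p A a * pr p C c

/-- The uniform joint distribution of two independent uniform categorical variables. -/
noncomputable def unif (NA NC : ℕ) : Fin NA × Fin NC → ℝ := fun _ => ((NA : ℝ) * NC)⁻¹

/-- The first (augmentation) variable `A`, uniform on `{0,…,NA-1}`. -/
def Av {NA NC : ℕ} : Fin NA × Fin NC → ℕ := fun ω => ω.1

/-- The second (class) variable `C`, uniform on `{0,…,NC-1}`. -/
def Cv {NA NC : ℕ} : Fin NA × Fin NC → ℕ := fun ω => ω.2

open Function

theorem pr_comp_of_injective {α β : Type*} (p : Ω → ℝ) (Y : Ω → α) {f : α → β}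
    (hf : Injective f) (a : α) : pr p (fun ω => f (Y ω)) (f a) = pr p Y a := by
  simp only [pr, hf.eq_iff]

theorem ent_comp_of_injective {α β : Type*} (p : Ω → ℝ) (Y : Ω → α) {f : α → β}
    (hf : Injective f) : ent p (fun ω => f (Y ω)) = ent p Y := by
  rw [ent, show univ.image (fun ω => f (Y ω)) = (univ.image Y).image f from
    (image_image ..).symm, sum_image fun a _ b _ h => hf h]
  simp only [ent, pr_comp_of_injective p Y hf]

theorem condEnt_eq_zero_of_eq_comp {α β : Type*} (p : Ω → ℝ) {Y : Ω → α} {X : Ω → β}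
    {g : β → α} (hY : ∀ ω, Y ω = g (X ω)) : condEnt p Y X = 0 := by
  have hinj : Injective fun x => (g x, x) := fun _ _ h => (Prod.ext_iff.1 h).2
  simp only [condEnt, hY, ent_comp_of_injective p X hinj, sub_self]

theorem cmi_eq_condEnt_of_eq_comp {α β γ : Type*} (p : Ω → ℝ) {A : Ω → α} (C : Ω → β)
    (X : Ω → γ) {g : γ × β → α} (hA : ∀ ω, A ω = g (X ω, C ω)) :
    cmi p A C X = condEnt p A X := by
  rw [cmi, condEnt_eq_zero_of_eq_comp p hA, sub_zero]

-- `ent` and `pr` are defined with classical decidability instances; these restatements take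
-- an arbitrary instance, so that later rewrites produce the canonical ones.
theorem ent_eq_sum {α : Type*} [DecidableEq α] (p : Ω → ℝ) (Y : Ω → α) :
    ent p Y = ∑ a ∈ univ.image Y, -(pr p Y a * Real.log (pr p Y a)) := by
  unfold ent
  congr!

theorem pr_const {α : Type*} [DecidableEq α] (c : ℝ) (Y : Ω → α) (a : α) :
    pr (fun _ => c) Y a = #{ω | Y ω = a} * c := by
  rw [pr, sum_const, nsmul_eq_mul]
  congr!

theorem ent_const_inv_card {α : Type*} [DecidableEq α] (Y : Ω → α) :
    ent (fun _ => (Fintype.card Ω : ℝ)⁻¹) Y = Real.log (Fintype.card Ω)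
      - (Fintype.card Ω : ℝ)⁻¹ * ∑ a ∈ univ.image Y, #{ω | Y ω = a} * Real.log #{ω | Y ω = a} := by
  rcases isEmpty_or_nonempty Ω with hΩ | hΩ
  · simp [ent]
  set N : ℝ := (Fintype.card Ω : ℝ) with hN_def
  have hN : N ≠ 0 := Nat.cast_ne_zero.2 Fintype.card_ne_zero
  have hterm : ∀ a ∈ univ.image Y, -(pr (fun _ => N⁻¹) Y a * Real.log (pr (fun _ => N⁻¹) Y a))
      = #{ω | Y ω = a} * N⁻¹ * Real.log N - N⁻¹ * (#{ω | Y ω = a} * Real.log #{ω | Y ω = a}) := by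
    intro a ha
    obtain ⟨ω, -, rfl⟩ := mem_image.1 ha
    have hfib : (#{ω' | Y ω' = Y ω} : ℝ) ≠ 0 :=
      Nat.cast_ne_zero.2 (card_ne_zero_of_mem (mem_filter.2 ⟨mem_univ ω, rfl⟩))
    rw [pr_const, Real.log_mul hfib (inv_ne_zero hN), Real.log_inv]
    ring
  rw [ent_eq_sum, sum_congr rfl hterm, sum_sub_distrib, ← sum_mul, ← sum_mul, ← mul_sum,
    ← Nat.cast_sum, ← card_eq_sum_card_image, card_univ, ← hN_def, mul_inv_cancel₀ hN, one_mul]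

theorem ent_const_inv_card_of_injective {α : Type*} {Y : Ω → α} (hY : Injective Y) :
    ent (fun _ => (Fintype.card Ω : ℝ)⁻¹) Y = Real.log (Fintype.card Ω) := by
  classical
  have hfib : ∀ a ∈ univ.image Y, #{ω | Y ω = a} = 1 := by
    intro a ha
    obtain ⟨ω, -, rfl⟩ := mem_image.1 ha
    exact card_eq_one.2 ⟨ω, by ext; simp [hY.eq_iff]⟩
  rw [ent_const_inv_card, sum_congr rfl fun a ha => by rw [hfib a ha]]
  simp

theorem sq_mul_log_sub_le_two_mul_sum_mul_log {n : ℕ} (hn : 1 ≤ n) :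
    (n : ℝ) ^ 2 * Real.log n - ((n : ℝ) ^ 2 - 1) / 2
      ≤ 2 * ∑ k ∈ range n, ((k + 1 : ℕ) : ℝ) * Real.log ((k + 1 : ℕ) : ℝ) := by
  induction n, hn using Nat.le_induction with
  | base => simp
  | succ m hm ih =>
    have hm' : (1 : ℝ) ≤ m := by exact_mod_cast hm
    have hlog : Real.log (m + 1) ≤ Real.log m + 1 / m := by
      have h := Real.log_le_sub_one_of_pos (x := (m + 1) / m) (by positivity)
      have hdiv : ((m : ℝ) + 1) / m - 1 = 1 / m := by field_simp; ring
      rw [Real.log_div (by positivity) (by positivity), hdiv] at h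
      linarith
    have key : ((m : ℝ) ^ 2 - 1) * Real.log (m + 1) ≤ (m : ℝ) ^ 2 * Real.log m + m := by
      have h := mul_le_mul_of_nonneg_left hlog (by nlinarith : (0 : ℝ) ≤ (m : ℝ) ^ 2 - 1)
      have hsmall : ((m : ℝ) ^ 2 - 1) * (1 / m) ≤ m := by
        rw [mul_one_div, div_le_iff₀ (by positivity)]; nlinarith
      nlinarith [Real.log_nonneg hm']
    rw [sum_range_succ]
    push_cast at ih ⊢
    nlinarith

section SumOfUniforms

variable {NA NC : ℕ}

theorem unif_eq_const_inv_card :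
    unif NA NC = fun _ => (Fintype.card (Fin NA × Fin NC) : ℝ)⁻¹ := by
  ext
  simp [unif, Fintype.card_prod]

theorem card_fiber_add (h : NC ≤ NA) (x : ℕ) :
    #{ω : Fin NA × Fin NC | Av ω + Cv ω = x} = min (min (x + 1) NC) (NA + NC - 1 - x) := by
  have hfib : #{ω : Fin NA × Fin NC | Av ω + Cv ω = x}
      = #(Ico (x + 1 - NA) (min (x + 1) NC)) := by
    refine card_bij (fun ω _ => (ω.2 : ℕ)) ?_ ?_ ?_
    · rintro ⟨a, c⟩ hω
      have hsum : (a : ℕ) + c = x := (mem_filter.1 hω).2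
      simp only [mem_Ico]
      omega
    · rintro ⟨a, c⟩ hω ⟨a', c'⟩ hω' (hc : (c : ℕ) = c')
      have hsum : (a : ℕ) + c = x := (mem_filter.1 hω).2
      have hsum' : (a' : ℕ) + c' = x := (mem_filter.1 hω').2
      ext <;> simp only <;> omega
    · intro c hc
      rw [mem_Ico] at hc
      refine ⟨(⟨x - c, by omega⟩, ⟨c, by omega⟩), mem_filter.2 ⟨mem_univ _, ?_⟩, rfl⟩
      simp only [Av, Cv]
      omega
  rw [hfib, Nat.card_Ico]
  omega

theorem sum_trapezoid {M : Type*} [AddCommMonoid M] (φ : ℕ → M) (h1 : 1 ≤ NC) (h2 : NC ≤ NA) :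
    ∑ x ∈ range (NA + NC - 1), φ (min (min (x + 1) NC) (NA + NC - 1 - x))
      = 2 • ∑ k ∈ range (NC - 1), φ (k + 1) + (NA + 1 - NC) • φ NC := by
  rw [show NA + NC - 1 = NC - 1 + (NA + 1 - NC) + (NC - 1) by omega, sum_range_add, sum_range_add]
  have hrise : ∑ x ∈ range (NC - 1),
      φ (min (min (x + 1) NC) (NC - 1 + (NA + 1 - NC) + (NC - 1) - x))
        = ∑ k ∈ range (NC - 1), φ (k + 1) := by
    refine sum_congr rfl fun x hx => congrArg φ ?_
    rw [mem_range] at hx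
    omega
  have hflat : ∑ x ∈ range (NA + 1 - NC),
      φ (min (min (NC - 1 + x + 1) NC) (NC - 1 + (NA + 1 - NC) + (NC - 1) - (NC - 1 + x)))
        = (NA + 1 - NC) • φ NC := by
    rw [sum_congr rfl fun x hx => congrArg φ ?_, sum_const, card_range]
    rw [mem_range] at hx
    omega
  have hfall : ∑ x ∈ range (NC - 1), φ (min (min (NC - 1 + (NA + 1 - NC) + x + 1) NC)
      (NC - 1 + (NA + 1 - NC) + (NC - 1) - (NC - 1 + (NA + 1 - NC) + x)))
        = ∑ k ∈ range (NC - 1), φ (k + 1) := by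
    rw [← sum_range_reflect]
    refine sum_congr rfl fun x hx => congrArg φ ?_
    rw [mem_range] at hx
    omega
  rw [hrise, hflat, hfall, two_nsmul]
  abel

theorem cmi_unif_add (h : NC ≤ NA) :
    cmi (unif NA NC) Av Cv (fun ω => Av ω + Cv ω)
      = ((NA : ℝ) * NC)⁻¹ * ∑ x ∈ range (NA + NC - 1),
          ((min (min (x + 1) NC) (NA + NC - 1 - x) : ℕ) : ℝ)
            * Real.log ((min (min (x + 1) NC) (NA + NC - 1 - x) : ℕ) : ℝ) := by
  have hinj : Injective fun ω : Fin NA × Fin NC => (Av ω, Av ω + Cv ω) := by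
    rintro ⟨a, c⟩ ⟨a', c'⟩ h
    simp only [Prod.mk.injEq, Av, Cv] at h
    ext <;> simp only <;> omega
  rw [cmi_eq_condEnt_of_eq_comp _ _ _ (g := fun q => q.1 - q.2) fun _ => by simp, condEnt,
    unif_eq_const_inv_card, ent_const_inv_card_of_injective hinj, ent_const_inv_card,
    sub_sub_cancel, Fintype.card_prod, Fintype.card_fin, Fintype.card_fin, Nat.cast_mul,
    sum_subset (s₂ := range (NA + NC - 1)) ?_ ?_]
  · simp only [card_fiber_add h]
  · intro x hx
    obtain ⟨⟨a, c⟩, -, rfl⟩ := mem_image.1 hx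
    simp only [Av, Cv, mem_range]
    omega
  · intro x _ hx
    rw [card_eq_zero.2 (filter_eq_empty_iff.2 fun ω _ hω => hx (mem_image.2 ⟨ω, mem_univ _, hω⟩))]
    simp

end SumOfUniforms

/-- For `N_A ≥ N_C ≥ 2` and `X = A + C`,
`I(A;C|X) ≥ ln N_C - (1/N_A)[(N_C-1) ln N_C - ((N_C-1)²/N_C) ln(N_C-1) + (N_C-2)/2]`. -/
theorem stmt_5 (NA NC : ℕ) (h1 : 2 ≤ NC) (h2 : NC ≤ NA) :
    Real.log NC - 1 / (NA : ℝ) *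
        (((NC : ℝ) - 1) * Real.log NC - ((NC : ℝ) - 1) ^ 2 / NC * Real.log ((NC : ℝ) - 1)
          + ((NC : ℝ) - 2) / 2)
      ≤ cmi (unif NA NC) Av Cv (fun ω => Av ω + Cv ω) := by
  have hNA : (0 : ℝ) < NA := by exact_mod_cast (by omega : 0 < NA)
  have hNC : (0 : ℝ) < NC := by exact_mod_cast (by omega : 0 < NC)
  have hbound := sq_mul_log_sub_le_two_mul_sum_mul_log (n := NC - 1) (by omega)
  rw [Nat.cast_sub (by omega : 1 ≤ NC), Nat.cast_one] at hbound
  rw [cmi_unif_add h2, sum_trapezoid (fun n : ℕ => (n : ℝ) * Real.log n) (by omega) h2,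
    nsmul_eq_mul, nsmul_eq_mul, Nat.cast_sub (by omega : NC ≤ NA + 1)]
  push_cast at hbound ⊢
  calc _ = ((NA : ℝ) * NC)⁻¹ * ((((NC : ℝ) - 1) ^ 2 * Real.log ((NC : ℝ) - 1)
          - (((NC : ℝ) - 1) ^ 2 - 1) / 2) + ((NA : ℝ) + 1 - NC) * (NC * Real.log NC)) := by
        field_simp
        ring
    _ ≤ _ := by gcongr

end ESSL
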